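/- arXiv:1811.10701 — 6 statements merged into one kernel-verified Lean document; each statement's English description precedes it below -/
import Mathlib

section
/- Let A be a commutative unital complex Banach algebra, let d ≥ 1 and p ≥ 1 be integers, let e₁, …, e_d ∈ A, and let real coefficients C_α be given for every multi-index α ∈ ℕ^d with |α| = p. Suppose Σ_{|α|=p} C_α · e₁^{α₁} ⋯ e_d^{α_d} = 0 in A. Let (c_r)_{r≥0} be complex numbers with Σ_{r=0}^∞ |c_r| R^r < ∞ for every R > 0 (i.e. Φ(z) = Σ_r c_r z^r is entire). Then the function u : ℝ^d → A defined by u(x₁,…,x_d) = Σ_{r=0}^∞ c_r (x₁e₁ + ⋯ + x_d e_d)^r satisfies the homogeneous equation Σ_{|α|=p} C_α · ∂^{p} u / (∂x₁^{α₁} ⋯ ∂x_d^{α_d}) = 0 at every point of ℝ^d. -/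
open scoped BigOperators

/-- The partial derivative of an `A`-valued function on `ℝ^d` in the `j`-th coordinate
direction. -/
noncomputable def partialDeriv' {A : Type*} [NormedAddCommGroup A] [NormedSpace ℝ A]
    {d : ℕ} (j : Fin d) (u : (Fin d → ℝ) → A) : (Fin d → ℝ) → A :=
  fun x => fderiv ℝ u x (Pi.single j 1)

/-- The mixed partial derivative `∂^{|α|} u / (∂x₁^{α₁} ⋯ ∂x_d^{α_d})` associated to the
multi-index `α`. -/
noncomputable def mixedPartialDeriv {A : Type*} [NormedAddCommGroup A] [NormedSpace ℝ A]
    {d : ℕ} (α : Fin d → ℕ) (u : (Fin d → ℝ) → A) : (Fin d → ℝ) → A :=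
  (List.finRange d).foldr (fun j v => (partialDeriv' j)^[α j] v) u

/-!
Write `T x = x₁e₁ + ⋯ + x_d e_d`, a continuous ℝ-linear map, and `Φ_c(a) = Σ c_r a^r`, so that
`u = Φ_c ∘ T`. Differentiating termwise in the commutative Banach algebra gives
`DΦ_c(a) h = Φ_{c'}(a) h` with `c'_r = (r + 1) c_{r+1}`, again entire coefficients. Hence
`∂_j (a · Φ_c ∘ T) = a e_j · Φ_{c'} ∘ T`, and by induction `∂^α u = e^α · Φ_{c^{(|α|)}} ∘ T`.
For `|α| = p` the second factor does not depend on `α`, so the left-hand side of the equation is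
`(Σ C_α e^α) · Φ_{c^{(p)}}(T x) = 0`.
-/

open FormalMultilinearSeries

def EntireCoeffs {𝕜 : Type*} [Norm 𝕜] (c : ℕ → 𝕜) : Prop :=
  ∀ R : ℝ, 0 < R → Summable fun r : ℕ => ‖c r‖ * R ^ r

def derivCoeffs {𝕜 : Type*} [Semiring 𝕜] (c : ℕ → 𝕜) : ℕ → 𝕜 :=
  fun r => ((r : 𝕜) + 1) * c (r + 1)

lemma norm_pow_le_norm_one_add_one_mul {A : Type*} [SeminormedRing A] (a : A) (n : ℕ) :
    ‖a ^ n‖ ≤ (‖(1 : A)‖ + 1) * ‖a‖ ^ n := by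
  rcases n.eq_zero_or_pos with rfl | hn
  · simp
  · calc ‖a ^ n‖ ≤ ‖a‖ ^ n := norm_pow_le' a hn
      _ ≤ (‖(1 : A)‖ + 1) * ‖a‖ ^ n := le_mul_of_one_le_left (by positivity) (by simp)

namespace EntireCoeffs

variable {𝕜 : Type*} [NormedField 𝕜] {c : ℕ → 𝕜}

lemma summable_norm_mul_pow (hc : EntireCoeffs c) {R : ℝ} (hR : 0 ≤ R) :
    Summable fun r : ℕ => ‖c r‖ * R ^ r :=
  (hc (R + 1) (by linarith)).of_nonneg_of_le (fun r => by positivity)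
    fun r => by gcongr; linarith

lemma summable_succ_mul_norm_mul_pow (hc : EntireCoeffs c) {R : ℝ} (hR : 0 < R) :
    Summable fun r : ℕ => ((r : ℝ) + 1) * ‖c (r + 1)‖ * R ^ r := by
  have h2R : Summable fun r : ℕ => ‖c (r + 1)‖ * (2 * R) ^ (r + 1) :=
    (summable_nat_add_iff 1).mpr (hc (2 * R) (by positivity))
  refine (h2R.mul_left R⁻¹).of_nonneg_of_le (fun r => by positivity) fun r => ?_
  have hr : ((r : ℝ) + 1) ≤ 2 ^ (r + 1) := by exact_mod_cast (Nat.lt_two_pow_self (n := r + 1)).le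
  calc ((r : ℝ) + 1) * ‖c (r + 1)‖ * R ^ r
      = R⁻¹ * (((r : ℝ) + 1) * (‖c (r + 1)‖ * R ^ (r + 1))) := by
        rw [pow_succ]; field_simp
    _ ≤ R⁻¹ * (2 ^ (r + 1) * (‖c (r + 1)‖ * R ^ (r + 1))) := by gcongr
    _ = R⁻¹ * (‖c (r + 1)‖ * (2 * R) ^ (r + 1)) := by ring

lemma derivCoeffs (hc : EntireCoeffs c) : EntireCoeffs (derivCoeffs c) := by
  refine fun R hR => (hc.summable_succ_mul_norm_mul_pow hR).of_nonneg_of_le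
    (fun r => by positivity) fun r => ?_
  rw [_root_.derivCoeffs, norm_mul, ← Nat.cast_succ, ← Nat.cast_succ]
  gcongr
  simpa using Nat.norm_cast_le (α := 𝕜) (r + 1)

lemma iterate_derivCoeffs (hc : EntireCoeffs c) (k : ℕ) :
    EntireCoeffs (_root_.derivCoeffs^[k] c) := by
  induction k with
  | zero => exact hc
  | succ k ih => rw [Function.iterate_succ_apply']; exact ih.derivCoeffs

lemma summable_smul_pow {A : Type*} [NormedRing A] [NormedAlgebra 𝕜 A] [CompleteSpace A]
    (hc : EntireCoeffs c) (a : A) : Summable fun r : ℕ => c r • a ^ r := by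
  refine .of_norm <| ((hc.summable_norm_mul_pow (norm_nonneg a)).mul_left (‖(1 : A)‖ + 1))
    |>.of_nonneg_of_le (fun r => norm_nonneg _) fun r => ?_
  calc ‖c r • a ^ r‖ ≤ ‖c r‖ * ((‖(1 : A)‖ + 1) * ‖a‖ ^ r) := by
        rw [norm_smul]; gcongr; exact norm_pow_le_norm_one_add_one_mul a r
    _ = (‖(1 : A)‖ + 1) * (‖c r‖ * ‖a‖ ^ r) := by ring

end EntireCoeffs

section Derivative

variable {𝕜 A : Type*} [NontriviallyNormedField 𝕜] [NormedCommRing A] [NormedAlgebra 𝕜 A]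
  {c : ℕ → 𝕜}

lemma hasFDerivAt_smul_pow (c : 𝕜) (n : ℕ) (a : A) :
    HasFDerivAt (fun b : A => c • b ^ n)
      (ContinuousLinearMap.mul 𝕜 A (c • n • a ^ (n - 1))) a := by
  refine ((hasFDerivAt_pow n).const_smul c).congr_fderiv ?_
  ext h
  simp

lemma hasSum_smul_nsmul_pow_sub_one [CompleteSpace A] (hc : EntireCoeffs c) (a : A) :
    HasSum (fun n : ℕ => c n • n • a ^ (n - 1)) (ofScalarsSum (E := A) (derivCoeffs c) a) := by
  refine (hasSum_nat_add_iff' 1).mp ?_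
  simp only [Finset.sum_range_one, zero_smul, smul_zero, sub_zero, Nat.add_sub_cancel,
    ofScalars_sum_eq]
  have hterm (n : ℕ) : c (n + 1) • (n + 1) • a ^ n = derivCoeffs c n • a ^ n := by
    rw [derivCoeffs, mul_smul, smul_comm, ← Nat.cast_smul_eq_nsmul 𝕜, Nat.cast_succ]
  simpa only [hterm] using (hc.derivCoeffs.summable_smul_pow a).hasSum

theorem hasFDerivAt_ofScalarsSum [IsRCLikeNormedField 𝕜] [CompleteSpace A]
    (hc : EntireCoeffs c) (a : A) :
    HasFDerivAt (ofScalarsSum (E := A) c)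
      (ContinuousLinearMap.mul 𝕜 A (ofScalarsSum (E := A) (derivCoeffs c) a)) a := by
  let : RCLike 𝕜 := IsRCLikeNormedField.rclike 𝕜
  let : NormedSpace ℝ A := NormedSpace.restrictScalars ℝ 𝕜 A
  set R := ‖a‖ + 1
  let u : ℕ → ℝ := fun n => (‖(1 : A)‖ + 1) * (n * ‖c n‖ * R ^ (n - 1))
  have hu : Summable u := by
    refine (summable_nat_add_iff 1).mp ?_
    simpa [u, mul_assoc] using
      (hc.summable_succ_mul_norm_mul_pow (by positivity : 0 < R)).mul_left (‖(1 : A)‖ + 1)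
  have hbound : ∀ n, ∀ b ∈ Metric.ball (0 : A) R,
      ‖ContinuousLinearMap.mul 𝕜 A (c n • n • b ^ (n - 1))‖ ≤ u n := by
    intro n b hb
    have hb : ‖b‖ ≤ R := (mem_ball_zero_iff.mp hb).le
    calc ‖ContinuousLinearMap.mul 𝕜 A (c n • n • b ^ (n - 1))‖ ≤ ‖c n • n • b ^ (n - 1)‖ :=
          ContinuousLinearMap.opNorm_mul_apply_le 𝕜 A _
      _ ≤ ‖c n‖ * (n * ((‖(1 : A)‖ + 1) * R ^ (n - 1))) := by
          rw [norm_smul]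
          gcongr
          refine norm_nsmul_le.trans ?_
          gcongr
          exact (norm_pow_le_norm_one_add_one_mul b _).trans (by gcongr)
      _ = u n := by ring
  have hderiv := hasFDerivAt_tsum_of_isPreconnected (𝕜 := 𝕜) (f := fun n b => c n • b ^ n)
    (f' := fun n b => ContinuousLinearMap.mul 𝕜 A (c n • n • b ^ (n - 1))) hu Metric.isOpen_ball
    (convex_ball (0 : A) R).isPreconnected (fun n b _ => hasFDerivAt_smul_pow (c n) n b) hbound
    (mem_ball_zero_iff.mpr (lt_add_one _)) (hc.summable_smul_pow a)
    (mem_ball_zero_iff.mpr (lt_add_one _))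
  rwa [← ((hasSum_smul_nsmul_pow_sub_one hc a).mapL _).tsum_eq, ofScalarsSum_eq_tsum]

end Derivative

section PartialDerivatives

variable {A : Type*} [NormedCommRing A] [NormedAlgebra ℂ A] [CompleteSpace A] {d : ℕ}
  (T : (Fin d → ℝ) →L[ℝ] A)

lemma partialDeriv'_const_mul_ofScalarsSum_comp {c : ℕ → ℂ} (hc : EntireCoeffs c) (a : A)
    (j : Fin d) :
    partialDeriv' j (fun x => a * ofScalarsSum c (T x))
      = fun x => a * T (Pi.single j 1) * ofScalarsSum (derivCoeffs c) (T x) := by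
  funext x
  have h : HasFDerivAt (fun x => a * ofScalarsSum c (T x)) _ x :=
    (((hasFDerivAt_ofScalarsSum hc (T x)).restrictScalars ℝ).comp x T.hasFDerivAt).const_mul a
  rw [partialDeriv', h.fderiv]
  simp only [_root_.smul_apply, ContinuousLinearMap.comp_apply,
    ContinuousLinearMap.coe_restrictScalars', ContinuousLinearMap.mul_apply', smul_eq_mul]
  ring

lemma iterate_partialDeriv'_const_mul_ofScalarsSum_comp {c : ℕ → ℂ} (hc : EntireCoeffs c)
    (a : A) (j : Fin d) (k : ℕ) :
    (partialDeriv' j)^[k] (fun x => a * ofScalarsSum c (T x))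
      = fun x => a * T (Pi.single j 1) ^ k * ofScalarsSum (derivCoeffs^[k] c) (T x) := by
  induction k generalizing c a with
  | zero => simp
  | succ k ih =>
    rw [Function.iterate_succ_apply, partialDeriv'_const_mul_ofScalarsSum_comp T hc,
      ih hc.derivCoeffs, ← Function.iterate_succ_apply, pow_succ', mul_assoc a]

lemma foldr_iterate_partialDeriv'_const_mul_ofScalarsSum_comp {c : ℕ → ℂ}
    (hc : EntireCoeffs c) (a : A) (α : Fin d → ℕ) (l : List (Fin d)) :
    l.foldr (fun j v => (partialDeriv' j)^[α j] v) (fun x => a * ofScalarsSum c (T x))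
      = fun x => a * (l.map fun j => T (Pi.single j 1) ^ α j).prod
          * ofScalarsSum (derivCoeffs^[(l.map α).sum] c) (T x) := by
  induction l generalizing c a with
  | nil => simp
  | cons j l ih =>
    rw [List.foldr_cons, ih hc,
      iterate_partialDeriv'_const_mul_ofScalarsSum_comp T (hc.iterate_derivCoeffs _)]
    simp only [List.map_cons, List.sum_cons, List.prod_cons, Function.iterate_add_apply]
    funext x
    ring

theorem mixedPartialDeriv_ofScalarsSum_comp {c : ℕ → ℂ} (hc : EntireCoeffs c) (α : Fin d → ℕ) :
    mixedPartialDeriv α (fun x => ofScalarsSum c (T x))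
      = fun x => (∏ j, T (Pi.single j 1) ^ α j)
          * ofScalarsSum (derivCoeffs^[∑ j, α j] c) (T x) := by
  simpa [mixedPartialDeriv, Fin.prod_univ_def, Fin.sum_univ_def] using
    foldr_iterate_partialDeriv'_const_mul_ofScalarsSum_comp T hc 1 α (List.finRange d)

end PartialDerivatives

theorem analytic_solves_homogeneous_pde_of_char_eq_general
    {A : Type*} [NormedCommRing A] [NormedAlgebra ℂ A] [CompleteSpace A]
    (d p : ℕ) (e : Fin d → A) (C : (Fin d → ℕ) → ℝ)
    (c : ℕ → ℂ) (hc : ∀ R : ℝ, 0 < R → Summable fun r : ℕ => ‖c r‖ * R ^ r)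
    (hchar :
      ∑ α ∈ Finset.univ.filter (fun α : Fin d → Fin (p + 1) => ∑ j, (α j : ℕ) = p),
        (C (fun j => (α j : ℕ)) : ℂ) • ∏ j, e j ^ (α j : ℕ) = 0) :
    ∀ x : Fin d → ℝ,
      ∑ α ∈ Finset.univ.filter (fun α : Fin d → Fin (p + 1) => ∑ j, (α j : ℕ) = p),
        (C (fun j => (α j : ℕ)) : ℂ) •
          mixedPartialDeriv (fun j => (α j : ℕ))
            (fun y : Fin d → ℝ => ∑' r : ℕ, c r • (∑ j, y j • e j) ^ r) x = 0 := by
  intro x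
  let T : (Fin d → ℝ) →L[ℝ] A := (Fintype.linearCombination ℝ e).toContinuousLinearMap
  have hT : ∀ j, T (Pi.single j 1) = e j := fun j => by
    simp [T, Fintype.linearCombination_apply_single]
  have hu : (fun y : Fin d → ℝ => ∑' r : ℕ, c r • (∑ j, y j • e j) ^ r)
      = fun y => ofScalarsSum c (T y) := by
    simp [T, ofScalars_sum_eq, Fintype.linearCombination_apply]
  have hterm : ∀ α ∈ Finset.univ.filter (fun α : Fin d → Fin (p + 1) => ∑ j, (α j : ℕ) = p),
      (C (fun j => (α j : ℕ)) : ℂ) • mixedPartialDeriv (fun j => (α j : ℕ))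
          (fun y => ofScalarsSum c (T y)) x
        = ((C (fun j => (α j : ℕ)) : ℂ) • ∏ j, e j ^ (α j : ℕ))
            * ofScalarsSum (derivCoeffs^[p] c) (T x) := fun α hα => by
    rw [mixedPartialDeriv_ofScalarsSum_comp T hc, (Finset.mem_filter.mp hα).2, smul_mul_assoc]
    simp only [hT]
  rw [hu, Finset.sum_congr rfl hterm, ← Finset.sum_mul, hchar, zero_mul]

/-- If the vectors `e₁, …, e_d` of a commutative unital complex Banach algebra `A` satisfy the
homogeneous characteristic equation `Σ_{|α|=p} C_α e₁^{α₁} ⋯ e_d^{α_d} = 0`, and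
`Φ(z) = Σ_r c_r z^r` is an entire function, then `u(x) = Σ_r c_r (x₁e₁ + ⋯ + x_d e_d)^r`
satisfies `Σ_{|α|=p} C_α ∂^{p} u / (∂x₁^{α₁} ⋯ ∂x_d^{α_d}) = 0` everywhere on `ℝ^d`. -/
theorem analytic_solves_homogeneous_pde_of_char_eq
    {A : Type*} [NormedCommRing A] [NormedAlgebra ℂ A] [CompleteSpace A]
    (d p : ℕ) (hd : 1 ≤ d) (hp : 1 ≤ p) (e : Fin d → A) (C : (Fin d → ℕ) → ℝ)
    (c : ℕ → ℂ) (hc : ∀ R : ℝ, 0 < R → Summable fun r : ℕ => ‖c r‖ * R ^ r)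
    (hchar :
      ∑ α ∈ Finset.univ.filter (fun α : Fin d → Fin (p + 1) => ∑ j, (α j : ℕ) = p),
        (C (fun j => (α j : ℕ)) : ℂ) • ∏ j, e j ^ (α j : ℕ) = 0) :
    ∀ x : Fin d → ℝ,
      ∑ α ∈ Finset.univ.filter (fun α : Fin d → Fin (p + 1) => ∑ j, (α j : ℕ) = p),
        (C (fun j => (α j : ℕ)) : ℂ) •
          mixedPartialDeriv (fun j => (α j : ℕ))
            (fun y : Fin d → ℝ => ∑' r : ℕ, c r • (∑ j, y j • e j) ^ r) x = 0 :=
  analytic_solves_homogeneous_pde_of_char_eq_general d p e C c hc hchar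
end

section
/- Let k, m, g, k₁, m₁, g₁, k₂, m₂, g₂ ∈ ℂ satisfy k² + m² + g² = 0, k·k₁ + m·m₁ + g·g₁ = 0, and k₁² + m₁² + g₁² + 2(k·k₂ + m·m₂ + g·g₂) = 0, and let F : ℂ → ℂ be complex-differentiable on all of ℂ with derivative F'. Then the function u : ℝ³ → ℂ defined by u(x,y,z) = (k₂x + m₂y + g₂z) · F(ξ) + (1/2)(k₁x + m₁y + g₁z)² · F'(ξ), where ξ = kx + my + gz, satisfies the three-dimensional Laplace equation ∂²u/∂x² + ∂²u/∂y² + ∂²u/∂z² = 0 at every point of ℝ³. -/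
/-!
Along each coordinate line `u` is the restriction to `ℝ` of the entire function
`z ↦ (a z + A) F(c z + C) + ½ (b z + B)² F'(c z + C)`, whose second derivative is, by Leibniz's rule,
`(2ac + b²) F' + ((a z + A) c² + 2bc (b z + B)) F'' + ½ (b z + B)² c² F'''` at `ξ = c z + C`.
Summing over the three coordinate directions, the coefficients of `F'`, `F''` and `F'''` become
combinations of the three characteristic relations, hence vanish.
-/

theorem iteratedDeriv_comp_ofReal {φ : ℂ → ℂ} (hφ : Differentiable ℂ φ) (n : ℕ) (x : ℝ) :
    iteratedDeriv n (fun s : ℝ => φ s) x = iteratedDeriv n φ x := by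
  induction n generalizing φ with
  | zero => simp
  | succ n ih =>
    have hderiv : deriv (fun s : ℝ => φ s) = fun s : ℝ => deriv φ s :=
      funext fun s => (hφ s).hasDerivAt.comp_ofReal.deriv
    rw [iteratedDeriv_succ', iteratedDeriv_succ', hderiv, ih hφ.deriv]

section

variable {𝕜 : Type*} [NontriviallyNormedField 𝕜]

theorem iteratedDeriv_comp_mul_add {n : ℕ} {f : 𝕜 → 𝕜} (hf : ContDiff 𝕜 n f) (c C : 𝕜) :
    iteratedDeriv n (fun x => f (c * x + C)) = fun x => c ^ n * iteratedDeriv n f (c * x + C) := by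
  have hshift : ContDiff 𝕜 n (fun y => f (y + C)) := hf.comp (contDiff_id.add contDiff_const)
  rw [iteratedDeriv_comp_const_mul hshift, iteratedDeriv_comp_add_const]

theorem iteratedDeriv_two_mul_comp_mul_add {p f : 𝕜 → 𝕜} (hp : ContDiff 𝕜 2 p)
    (hf : ContDiff 𝕜 2 f) (c C x : 𝕜) :
    iteratedDeriv 2 (fun y => p y * f (c * y + C)) x =
      iteratedDeriv 2 p x * f (c * x + C) + 2 * c * deriv p x * deriv f (c * x + C)
        + c ^ 2 * p x * iteratedDeriv 2 f (c * x + C) := by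
  have hcomp : ContDiff 𝕜 2 (fun y => f (c * y + C)) :=
    hf.comp ((contDiff_const.mul contDiff_id).add contDiff_const)
  rw [iteratedDeriv_fun_mul hp.contDiffAt hcomp.contDiffAt]
  simp only [Finset.sum_range_succ, Finset.sum_range_zero, Nat.reduceSub, Nat.choose_zero_right,
    Nat.choose_one_right, Nat.choose_self, Nat.cast_one, Nat.cast_ofNat, iteratedDeriv_zero,
    iteratedDeriv_one, iteratedDeriv_comp_mul_add hf,
    iteratedDeriv_comp_mul_add (n := 1) (hf.of_le one_le_two)]
  ring

theorem iteratedDeriv_two_mul_add (a A x : 𝕜) : iteratedDeriv 2 (fun y => a * y + A) x = 0 := by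
  rw [iteratedDeriv_comp_mul_add (f := fun t => t) contDiff_id]
  simp [iteratedDeriv_fun_id]

theorem iteratedDeriv_mul_add_sq (b B : 𝕜) (n : ℕ) :
    iteratedDeriv n (fun y => (b * y + B) ^ 2) =
      fun x => b ^ n * (Nat.descFactorial 2 n * (b * x + B) ^ (2 - n)) := by
  rw [iteratedDeriv_comp_mul_add (f := fun t => t ^ 2) (contDiff_id.pow 2)]
  simp only [iteratedDeriv_pow]

theorem deriv_half_mul_add_sq [CharZero 𝕜] (b B x : 𝕜) :
    deriv (fun y => 1 / 2 * (b * y + B) ^ 2) x = b * (b * x + B) := by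
  rw [deriv_const_mul_field', ← iteratedDeriv_one, iteratedDeriv_mul_add_sq]
  simp only [pow_one, Nat.descFactorial_succ, Nat.descFactorial_zero, Nat.cast_ofNat,
    Nat.add_one_sub_one, tsub_zero, mul_one]
  ring

theorem iteratedDeriv_two_half_mul_add_sq [CharZero 𝕜] (b B x : 𝕜) :
    iteratedDeriv 2 (fun y => 1 / 2 * (b * y + B) ^ 2) x = b ^ 2 := by
  rw [iteratedDeriv_const_mul_field, iteratedDeriv_mul_add_sq]
  simp [mul_comm]

end

noncomputable def ansatzDegTwo (F : ℂ → ℂ) (a A b B c C : ℂ) (z : ℂ) : ℂ :=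
  (a * z + A) * F (c * z + C) + 1 / 2 * (b * z + B) ^ 2 * deriv F (c * z + C)

section

variable {F : ℂ → ℂ}

theorem differentiable_ansatzDegTwo (hF : Differentiable ℂ F) (a A b B c C : ℂ) :
    Differentiable ℂ (ansatzDegTwo F a A b B c C) := by
  unfold ansatzDegTwo
  fun_prop

theorem iteratedDeriv_two_ansatzDegTwo (hF : Differentiable ℂ F) (a A b B c C x : ℂ) :
    iteratedDeriv 2 (ansatzDegTwo F a A b B c C) x =
      (2 * a * c + b ^ 2) * deriv F (c * x + C)
        + ((a * x + A) * c ^ 2 + 2 * b * c * (b * x + B)) * iteratedDeriv 2 F (c * x + C)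
        + 1 / 2 * (b * x + B) ^ 2 * c ^ 2 * iteratedDeriv 3 F (c * x + C) := by
  have hF₂ : ContDiff ℂ 2 F := hF.contDiff
  have hF'₂ : ContDiff ℂ 2 (deriv F) := hF.deriv.contDiff
  have hF'' : deriv (deriv F) = iteratedDeriv 2 F := by
    rw [iteratedDeriv_succ, iteratedDeriv_one]
  unfold ansatzDegTwo
  rw [iteratedDeriv_fun_add (by fun_prop) (by fun_prop),
    iteratedDeriv_two_mul_comp_mul_add (by fun_prop) hF₂,
    iteratedDeriv_two_mul_comp_mul_add (by fun_prop) hF'₂,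
    iteratedDeriv_two_mul_add, deriv_add_const', deriv_const_mul_id',
    deriv_half_mul_add_sq, iteratedDeriv_two_half_mul_add_sq, ← iteratedDeriv_succ', hF'']
  ring

end

/-- If `k² + m² + g² = 0`, `k·k₁ + m·m₁ + g·g₁ = 0` and
`k₁² + m₁² + g₁² + 2(k·k₂ + m·m₂ + g·g₂) = 0`, and `F` is entire, then
`u(x,y,z) = (k₂x + m₂y + g₂z)·F(ξ) + (1/2)(k₁x + m₁y + g₁z)²·F'(ξ)` with `ξ = kx + my + gz`
satisfies the three-dimensional Laplace equation. -/
theorem laplace_solution_deg_two (k m g k₁ m₁ g₁ k₂ m₂ g₂ : ℂ)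
    (hchar : k ^ 2 + m ^ 2 + g ^ 2 = 0)
    (hchar1 : k * k₁ + m * m₁ + g * g₁ = 0)
    (hchar2 : k₁ ^ 2 + m₁ ^ 2 + g₁ ^ 2 + 2 * (k * k₂ + m * m₂ + g * g₂) = 0)
    (F : ℂ → ℂ) (hF : Differentiable ℂ F)
    (u : ℝ → ℝ → ℝ → ℂ)
    (hu : ∀ x y z : ℝ,
      u x y z = (k₂ * x + m₂ * y + g₂ * z) * F (k * x + m * y + g * z)
        + (1 / 2) * (k₁ * x + m₁ * y + g₁ * z) ^ 2 * deriv F (k * x + m * y + g * z)) :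
    ∀ x y z : ℝ,
      iteratedDeriv 2 (fun s : ℝ => u s y z) x
        + iteratedDeriv 2 (fun s : ℝ => u x s z) y
        + iteratedDeriv 2 (fun s : ℝ => u x y s) z = 0 := by
  intro x y z
  have hx : (fun s : ℝ => u s y z) = fun s : ℝ =>
      ansatzDegTwo F k₂ (m₂ * y + g₂ * z) k₁ (m₁ * y + g₁ * z) k (m * y + g * z) s := by
    funext s; rw [hu, ansatzDegTwo]; ring_nf
  have hy : (fun s : ℝ => u x s z) = fun s : ℝ =>
      ansatzDegTwo F m₂ (k₂ * x + g₂ * z) m₁ (k₁ * x + g₁ * z) m (k * x + g * z) s := by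
    funext s; rw [hu, ansatzDegTwo]; ring_nf
  have hz : (fun s : ℝ => u x y s) = fun s : ℝ =>
      ansatzDegTwo F g₂ (k₂ * x + m₂ * y) g₁ (k₁ * x + m₁ * y) g (k * x + m * y) s := by
    funext s; rw [hu, ansatzDegTwo]; ring_nf
  set ξ : ℂ := k * x + m * y + g * z
  rw [hx, hy, hz, iteratedDeriv_comp_ofReal (differentiable_ansatzDegTwo hF _ _ _ _ _ _),
    iteratedDeriv_comp_ofReal (differentiable_ansatzDegTwo hF _ _ _ _ _ _),
    iteratedDeriv_comp_ofReal (differentiable_ansatzDegTwo hF _ _ _ _ _ _),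
    iteratedDeriv_two_ansatzDegTwo hF, iteratedDeriv_two_ansatzDegTwo hF,
    iteratedDeriv_two_ansatzDegTwo hF, show k * x + (m * y + g * z) = ξ by ring,
    show m * y + (k * x + g * z) = ξ by ring, show g * z + (k * x + m * y) = ξ by ring]
  linear_combination deriv F ξ * hchar2
    + iteratedDeriv 2 F ξ * ((k₂ * x + m₂ * y + g₂ * z) * hchar
      + 2 * (k₁ * x + m₁ * y + g₁ * z) * hchar1)
    + iteratedDeriv 3 F ξ * (1 / 2 * (k₁ * x + m₁ * y + g₁ * z) ^ 2 * hchar)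
end

section
/- Let a ∈ ℝ and m₀, m₁, m₂ ∈ ℂ. Then the function u : ℝ² → ℂ defined by u(x,y) = [ i·a·(m₁² + 2m₀m₂)·x + m₂·y + (1/2)·(2·i·a·m₀·m₁·x + m₁·y)² ] · exp(i·a·m₀²·x + m₀·y) satisfies the equation ∂²u/∂x² + a²·∂⁴u/∂y⁴ = 0 at every point of ℝ². The same holds with every occurrence of i replaced by −i. -/
/-!
With `E m (x, y) = exp (ε a m² x + m y)`, the function `u` is
`m₂ ∂ₘE + (m₁² / 2) ∂ₘ²E` at `m = m₀`, and every `E m` solves the beam equation because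
`(ε a m²)² + a² m⁴ = 0` when `ε² = -1`. Along each coordinate line `u` is a quadratic polynomial
times an exponential, a shape preserved by differentiation, so both sides of the equation are
computed in closed form and the identity reduces to polynomial algebra modulo `ε² + 1`.
-/

open Complex

noncomputable def quadMulExp (α β γ δ μ : ℂ) (s : ℝ) : ℂ :=
  (α * s ^ 2 + β * s + γ) * exp (δ * s + μ)

theorem hasDerivAt_quadMulExp (α β γ δ μ : ℂ) (s : ℝ) :
    HasDerivAt (quadMulExp α β γ δ μ)
      (quadMulExp (δ * α) (δ * β + 2 * α) (δ * γ + β) δ μ s) s := by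
  have hquad : HasDerivAt (fun z : ℂ => α * z ^ 2 + β * z + γ) (2 * α * s + β) s := by
    simpa using ((((hasDerivAt_pow 2 (s : ℂ)).const_mul α).add
      ((hasDerivAt_id (s : ℂ)).const_mul β)).add_const γ).congr_deriv (by push_cast; ring)
  have hexp : HasDerivAt (fun z : ℂ => exp (δ * z + μ)) (exp (δ * s + μ) * δ) s := by
    simpa using (((hasDerivAt_id (s : ℂ)).const_mul δ).add_const μ).cexp
  exact (hquad.mul hexp).comp_ofReal.congr_deriv (by rw [quadMulExp]; ring)

theorem deriv_quadMulExp (α β γ δ μ : ℂ) :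
    deriv (quadMulExp α β γ δ μ) = quadMulExp (δ * α) (δ * β + 2 * α) (δ * γ + β) δ μ :=
  funext fun s => (hasDerivAt_quadMulExp α β γ δ μ s).deriv

theorem iteratedDeriv_two_quadMulExp (α β γ δ μ : ℂ) :
    iteratedDeriv 2 (quadMulExp α β γ δ μ) =
      quadMulExp (δ ^ 2 * α) (δ ^ 2 * β + 4 * δ * α) (δ ^ 2 * γ + 2 * δ * β + 2 * α) δ μ := by
  simp only [iteratedDeriv_succ', iteratedDeriv_zero, deriv_quadMulExp]
  ring_nf

theorem iteratedDeriv_four_quadMulExp (α β γ δ μ : ℂ) :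
    iteratedDeriv 4 (quadMulExp α β γ δ μ) =
      quadMulExp (δ ^ 4 * α) (δ ^ 4 * β + 8 * δ ^ 3 * α)
        (δ ^ 4 * γ + 4 * δ ^ 3 * β + 12 * δ ^ 2 * α) δ μ := by
  simp only [iteratedDeriv_succ', iteratedDeriv_zero, deriv_quadMulExp]
  ring_nf

/-- `u(x,y) = [±i·a·(m₁² + 2m₀m₂)·x + m₂·y + (1/2)(±2i·a·m₀·m₁·x + m₁·y)²] ·
exp(±i·a·m₀²·x + m₀·y)` satisfies the elastic beam equation `∂²u/∂x² + a²·∂⁴u/∂y⁴ = 0`. -/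
theorem beam_solution_deg_two (a : ℝ) (m₀ m₁ m₂ : ℂ) (ε : ℂ) (hε : ε = I ∨ ε = -I)
    (u : ℝ → ℝ → ℂ)
    (hu : ∀ x y : ℝ,
      u x y = (ε * a * (m₁ ^ 2 + 2 * m₀ * m₂) * x + m₂ * y
          + (1 / 2) * (2 * ε * a * m₀ * m₁ * x + m₁ * y) ^ 2)
        * Complex.exp (ε * a * m₀ ^ 2 * x + m₀ * y)) :
    ∀ x y : ℝ,
      iteratedDeriv 2 (fun s : ℝ => u s y) x
        + (a : ℂ) ^ 2 * iteratedDeriv 4 (fun s : ℝ => u x s) y = 0 := by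
  have hε2 : ε ^ 2 = -1 := by rcases hε with rfl | rfl <;> simp
  intro x y
  have hx : (fun s : ℝ => u s y) = quadMulExp (2 * ε ^ 2 * a ^ 2 * m₀ ^ 2 * m₁ ^ 2)
      (ε * a * (m₁ ^ 2 + 2 * m₀ * m₂) + 2 * ε * a * m₀ * m₁ ^ 2 * y)
      (m₂ * y + m₁ ^ 2 * y ^ 2 / 2) (ε * a * m₀ ^ 2) (m₀ * y) := by
    funext s; rw [hu, quadMulExp]; ring_nf
  have hy : (fun s : ℝ => u x s) = quadMulExp (m₁ ^ 2 / 2)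
      (m₂ + 2 * ε * a * m₀ * m₁ ^ 2 * x)
      (ε * a * (m₁ ^ 2 + 2 * m₀ * m₂) * x + 2 * ε ^ 2 * a ^ 2 * m₀ ^ 2 * m₁ ^ 2 * x ^ 2)
      m₀ (ε * a * m₀ ^ 2 * x) := by
    funext s; rw [hu, quadMulExp]; ring_nf
  rw [hx, hy, iteratedDeriv_two_quadMulExp, iteratedDeriv_four_quadMulExp]
  simp only [quadMulExp]
  rw [add_comm (m₀ * (y : ℂ))]
  grind
end

section
/- Let p ∈ ℝ and k₀, m₀, k₁, m₁ ∈ ℂ satisfy k₀⁴ + 2p·k₀²·m₀² + m₀⁴ = 0 and k₀³·k₁ + p·(k₀·k₁·m₀² + k₀²·m₀·m₁) + m₀³·m₁ = 0, and let F : ℂ → ℂ be complex-differentiable on all of ℂ. Then the function u : ℝ² → ℂ defined by u(x,y) = (k₁x + m₁y) · F(k₀x + m₀y) satisfies the generalized biharmonic equation ∂⁴u/∂x⁴ + 2p·∂⁴u/(∂x²∂y²) + ∂⁴u/∂y⁴ = 0 at every point of ℝ². -/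
/-!
Along every horizontal or vertical line, `u` restricts to `s ↦ (a s + b) G (c s + d)` with `G`
entire, whose `(n+1)`-st derivative is
`c^(n+1) (a s + b) G^(n+1)(c s + d) + (n+1) a c^n G^(n)(c s + d)`; for the mixed derivative
`∂ₓ²∂ᵧ²u` the profile carries an extra summand `e H(c s + d)`.
Writing `L = k₁x + m₁y` and `w = k₀x + m₀y`, the operator applied to `u` is therefore
`(k₀⁴ + 2p k₀²m₀² + m₀⁴) L F⁗(w) + 4 (k₀³k₁ + p (k₀k₁m₀² + k₀²m₀m₁) + m₀³m₁) F‴(w)`,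
and both brackets vanish by the characteristic equations.
-/

open scoped ContDiff

section

variable {G H : ℂ → ℂ}

theorem differentiable_iterate_deriv (hG : Differentiable ℂ G) (n : ℕ) :
    Differentiable ℂ (deriv^[n] G) :=
  ((hG.contDiff (n := ∞)).iterate_deriv n).differentiable (by simp)

theorem hasDerivAt_comp_affine_ofReal (hG : Differentiable ℂ G) (c d : ℂ) (x : ℝ) :
    HasDerivAt (fun s : ℝ => G (c * s + d)) (c * deriv G (c * x + d)) x := by
  have hline : HasDerivAt (fun z : ℂ => c * z + d) c x := by
    simpa using ((hasDerivAt_id (x : ℂ)).const_mul c).add_const d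
  simpa [mul_comm] using ((hG _).hasDerivAt.comp (x : ℂ) hline).comp_ofReal

theorem hasDerivAt_affine_mul_comp_affine_ofReal (hG : Differentiable ℂ G) (a b c d : ℂ)
    (x : ℝ) :
    HasDerivAt (fun s : ℝ => (a * s + b) * G (c * s + d))
      (a * G (c * x + d) + (a * x + b) * (c * deriv G (c * x + d))) x := by
  have hline : HasDerivAt (fun s : ℝ => a * (s : ℂ) + b) a x := by
    simpa using (((hasDerivAt_id (x : ℂ)).const_mul a).add_const b).comp_ofReal
  exact hline.mul (hasDerivAt_comp_affine_ofReal hG c d x)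

theorem iteratedDeriv_succ_affine_mul_comp_add (hG : Differentiable ℂ G)
    (hH : Differentiable ℂ H) (a b c d e : ℂ) (n : ℕ) (x : ℝ) :
    iteratedDeriv (n + 1) (fun s : ℝ => (a * s + b) * G (c * s + d) + e * H (c * s + d)) x
      = c ^ (n + 1) * ((a * x + b) * deriv^[n + 1] G (c * x + d))
        + (n + 1) * a * c ^ n * deriv^[n] G (c * x + d)
        + e * c ^ (n + 1) * deriv^[n + 1] H (c * x + d) := by
  induction n generalizing x with
  | zero =>
    rw [iteratedDeriv_one, ((hasDerivAt_affine_mul_comp_affine_ofReal hG a b c d x).fun_add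
      ((hasDerivAt_comp_affine_ofReal hH c d x).const_mul e)).deriv]
    simp only [zero_add, Function.iterate_one, Function.iterate_zero, id]
    push_cast; ring
  | succ n ih =>
    rw [iteratedDeriv_succ, funext ih]
    have hG' := differentiable_iterate_deriv hG
    rw [((((hasDerivAt_affine_mul_comp_affine_ofReal (hG' (n + 1)) a b c d x).const_mul
        (c ^ (n + 1))).fun_add ((hasDerivAt_comp_affine_ofReal (hG' n) c d x).const_mul
          ((n + 1) * a * c ^ n))).fun_add ((hasDerivAt_comp_affine_ofReal
            (differentiable_iterate_deriv hH (n + 1)) c d x).const_mul (e * c ^ (n + 1)))).deriv]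
    simp only [← Function.iterate_succ_apply' deriv]
    push_cast; ring

theorem iteratedDeriv_succ_affine_mul_comp (hG : Differentiable ℂ G) (a b c d : ℂ) (n : ℕ)
    (x : ℝ) :
    iteratedDeriv (n + 1) (fun s : ℝ => (a * s + b) * G (c * s + d)) x
      = c ^ (n + 1) * ((a * x + b) * deriv^[n + 1] G (c * x + d))
        + (n + 1) * a * c ^ n * deriv^[n] G (c * x + d) := by
  simpa using iteratedDeriv_succ_affine_mul_comp_add hG hG a b c d 0 n x

end

/-- If `k₀⁴ + 2p·k₀²·m₀² + m₀⁴ = 0`, `k₀³·k₁ + p·(k₀·k₁·m₀² + k₀²·m₀·m₁) + m₀³·m₁ = 0`, and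
`F` is entire, then `u(x,y) = (k₁x + m₁y)·F(k₀x + m₀y)` satisfies the generalized biharmonic
equation `∂⁴u/∂x⁴ + 2p·∂⁴u/(∂x²∂y²) + ∂⁴u/∂y⁴ = 0`. -/
theorem biharmonic_solution_deg_one (p : ℝ) (k₀ m₀ k₁ m₁ : ℂ)
    (hchar : k₀ ^ 4 + 2 * p * k₀ ^ 2 * m₀ ^ 2 + m₀ ^ 4 = 0)
    (hchar1 : k₀ ^ 3 * k₁ + p * (k₀ * k₁ * m₀ ^ 2 + k₀ ^ 2 * m₀ * m₁) + m₀ ^ 3 * m₁ = 0)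
    (F : ℂ → ℂ) (hF : Differentiable ℂ F)
    (u : ℝ → ℝ → ℂ)
    (hu : ∀ x y : ℝ, u x y = (k₁ * x + m₁ * y) * F (k₀ * x + m₀ * y)) :
    ∀ x y : ℝ,
      iteratedDeriv 4 (fun s : ℝ => u s y) x
        + 2 * (p : ℂ) *
            iteratedDeriv 2 (fun s : ℝ => iteratedDeriv 2 (fun t : ℝ => u s t) y) x
        + iteratedDeriv 4 (fun t : ℝ => u x t) y = 0 := by
  intro x y
  have hu' : ∀ s t : ℝ, u s t = (m₁ * t + k₁ * s) * F (m₀ * t + k₀ * s) := fun s t => by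
    rw [hu, add_comm (k₁ * _), add_comm (k₀ * _)]
  have hxx : iteratedDeriv 4 (fun s : ℝ => u s y) x
      = k₀ ^ 4 * ((k₁ * x + m₁ * y) * deriv^[4] F (k₀ * x + m₀ * y))
        + 4 * k₁ * k₀ ^ 3 * deriv^[3] F (k₀ * x + m₀ * y) := by
    simp_rw [hu, iteratedDeriv_succ_affine_mul_comp hF]
    norm_num
  have hyy : iteratedDeriv 4 (fun t : ℝ => u x t) y
      = m₀ ^ 4 * ((k₁ * x + m₁ * y) * deriv^[4] F (k₀ * x + m₀ * y))
        + 4 * m₁ * m₀ ^ 3 * deriv^[3] F (k₀ * x + m₀ * y) := by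
    simp_rw [hu', iteratedDeriv_succ_affine_mul_comp hF, add_comm (m₀ * _), add_comm (m₁ * _)]
    norm_num
  have hyy_line : (fun s : ℝ => iteratedDeriv 2 (fun t : ℝ => u s t) y)
      = fun s : ℝ => (m₀ ^ 2 * k₁ * s + m₀ ^ 2 * m₁ * y) * deriv^[2] F (k₀ * s + m₀ * y)
          + 2 * m₁ * m₀ * deriv^[1] F (k₀ * s + m₀ * y) := by
    funext s
    simp_rw [hu', iteratedDeriv_succ_affine_mul_comp hF, add_comm (m₀ * _)]
    push_cast; ring
  have hxxyy : iteratedDeriv 2 (fun s : ℝ => iteratedDeriv 2 (fun t : ℝ => u s t) y) x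
      = k₀ ^ 2 * m₀ ^ 2 * ((k₁ * x + m₁ * y) * deriv^[4] F (k₀ * x + m₀ * y))
        + (2 * m₀ ^ 2 * k₁ * k₀ + 2 * m₁ * m₀ * k₀ ^ 2) * deriv^[3] F (k₀ * x + m₀ * y) := by
    rw [hyy_line, iteratedDeriv_succ_affine_mul_comp_add (differentiable_iterate_deriv hF 2)
      (differentiable_iterate_deriv hF 1)]
    simp only [← Function.iterate_add_apply]
    push_cast; ring
  rw [hxx, hxxyy, hyy]
  linear_combination ((k₁ * x + m₁ * y) * deriv^[4] F (k₀ * x + m₀ * y)) * hchar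
    + 4 * deriv^[3] F (k₀ * x + m₀ * y) * hchar1
end

section
/- Let λ ∈ ℂ and k₀, m₀, k₁, m₁, k₂, m₂ ∈ ℂ satisfy k₀² + m₀² + λ = 0, k₀·k₁ + m₀·m₁ = 0, and k₁² + m₁² + 2(k₀·k₂ + m₀·m₂) = 0. Then the function u : ℝ² → ℂ defined by u(x,y) = [ (k₂x + m₂y) + (1/2)(k₁x + m₁y)² ] · exp(k₀x + m₀y) satisfies the two-dimensional Helmholtz equation ∂²u/∂x² + ∂²u/∂y² + λ·u = 0 at every point of ℝ². -/
/-!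
Write `u = q · exp(k₀x + m₀y)` with `q = (k₂x + m₂y) + ½(k₁x + m₁y)²`. Then
`Δu + λu = (Δq + 2(k₀ ∂ₓq + m₀ ∂ᵧq) + (k₀² + m₀² + λ) q) · exp(k₀x + m₀y)`, and
`Δq + 2(k₀ ∂ₓq + m₀ ∂ᵧq) = (k₁² + m₁² + 2(k₀k₂ + m₀m₂)) + 2(k₁x + m₁y)(k₀k₁ + m₀m₁)`,
so the three characteristic equations kill the three pieces.
-/

open Complex

lemma hasDerivAt_quadratic_mul_cexp (a b c d e : ℂ) (s : ℝ) :
    HasDerivAt (fun t : ℝ => (a + b * t + c * t ^ 2) * exp (d * t + e))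
      (((b + d * a) + (2 * c + d * b) * s + (d * c) * s ^ 2) * exp (d * s + e)) s := by
  have hq : HasDerivAt (fun z : ℂ => a + b * z + c * z ^ 2) (b + 2 * c * s) (s : ℂ) :=
    ((((hasDerivAt_id (s : ℂ)).const_mul b).const_add a).add
      ((hasDerivAt_pow 2 (s : ℂ)).const_mul c)).congr_deriv (by simp; ring)
  have hexp : HasDerivAt (fun z : ℂ => exp (d * z + e)) (exp (d * s + e) * d) (s : ℂ) := by
    simpa using (((hasDerivAt_id (s : ℂ)).const_mul d).add_const e).cexp
  have hprod : HasDerivAt (fun z : ℂ => (a + b * z + c * z ^ 2) * exp (d * z + e))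
      (((b + d * a) + (2 * c + d * b) * s + (d * c) * s ^ 2) * exp (d * s + e)) (s : ℂ) :=
    (hq.mul hexp).congr_deriv (by ring)
  exact hprod.comp_ofReal

lemma iteratedDeriv_two_quadratic_mul_cexp (a b c d e : ℂ) (s : ℝ) :
    iteratedDeriv 2 (fun t : ℝ => (a + b * t + c * t ^ 2) * exp (d * t + e)) s
      = (2 * c + 2 * d * (b + 2 * c * s) + d ^ 2 * (a + b * s + c * s ^ 2))
          * exp (d * s + e) := by
  have hderiv : deriv (fun t : ℝ => (a + b * t + c * t ^ 2) * exp (d * t + e))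
      = fun t : ℝ => ((b + d * a) + (2 * c + d * b) * t + (d * c) * t ^ 2)
          * exp (d * t + e) :=
    funext fun t => (hasDerivAt_quadratic_mul_cexp a b c d e t).deriv
  rw [iteratedDeriv_succ, iteratedDeriv_one, hderiv,
    (hasDerivAt_quadratic_mul_cexp _ _ _ d e s).deriv]
  ring

/-- If `k₀² + m₀² + λ = 0`, `k₀·k₁ + m₀·m₁ = 0` and `k₁² + m₁² + 2(k₀·k₂ + m₀·m₂) = 0`, then
`u(x,y) = [(k₂x + m₂y) + (1/2)(k₁x + m₁y)²]·exp(k₀x + m₀y)` satisfies the two-dimensional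
Helmholtz equation `∂²u/∂x² + ∂²u/∂y² + λ·u = 0`. -/
theorem helmholtz_solution_deg_two (lam k₀ m₀ k₁ m₁ k₂ m₂ : ℂ)
    (hchar : k₀ ^ 2 + m₀ ^ 2 + lam = 0)
    (hchar1 : k₀ * k₁ + m₀ * m₁ = 0)
    (hchar2 : k₁ ^ 2 + m₁ ^ 2 + 2 * (k₀ * k₂ + m₀ * m₂) = 0)
    (u : ℝ → ℝ → ℂ)
    (hu : ∀ x y : ℝ,
      u x y = ((k₂ * x + m₂ * y) + (1 / 2) * (k₁ * x + m₁ * y) ^ 2)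
        * Complex.exp (k₀ * x + m₀ * y)) :
    ∀ x y : ℝ,
      iteratedDeriv 2 (fun s : ℝ => u s y) x
        + iteratedDeriv 2 (fun t : ℝ => u x t) y
        + lam * u x y = 0 := by
  intro x y
  have hx : (fun s : ℝ => u s y) = fun s : ℝ =>
      ((m₂ * y + 1 / 2 * m₁ ^ 2 * y ^ 2) + (k₂ + k₁ * m₁ * y) * s + (1 / 2 * k₁ ^ 2) * s ^ 2)
        * exp (k₀ * s + m₀ * y) := by
    funext s
    rw [hu]
    ring_nf
  have hy : (fun t : ℝ => u x t) = fun t : ℝ =>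
      ((k₂ * x + 1 / 2 * k₁ ^ 2 * x ^ 2) + (m₂ + k₁ * m₁ * x) * t + (1 / 2 * m₁ ^ 2) * t ^ 2)
        * exp (m₀ * t + k₀ * x) := by
    funext t
    rw [hu, add_comm (k₀ * _)]
    ring
  rw [hx, hy, iteratedDeriv_two_quadratic_mul_cexp, iteratedDeriv_two_quadratic_mul_cexp, hu,
    add_comm (m₀ * _)]
  linear_combination exp (k₀ * x + m₀ * y) *
    (hchar2 + 2 * (k₁ * x + m₁ * y) * hchar1
      + ((k₂ * x + m₂ * y) + 1 / 2 * (k₁ * x + m₁ * y) ^ 2) * hchar)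
end

section
/- Let α, β ∈ ℝ with α > 0 and β > 0, and let k₀, m₀, k₁, m₁ ∈ ℂ satisfy k₀³ + α·k₀² − β·m₀² = 0 and 3·k₀²·k₁ + 2α·k₀·k₁ − 2β·m₀·m₁ = 0. Then the function V : ℝ² → ℂ defined by V(t,x) = (k₁·t + m₁·x) · exp(k₀·t + m₀·x) satisfies the third-order hydrodynamics equation ∂³V/∂t³ + α·∂²V/∂t² − β·∂²V/∂x² = 0 at every point of ℝ². -/
/-! Along each coordinate line `V` has the form `(a s + b) e^{c s + d}`, and its `n`-th derivative
is `(cⁿ (a s + b) + n cⁿ⁻¹ a) e^{c s + d}`. With `P(k, m) = k³ + α k² − β m²`, the left-hand side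
of the equation is therefore `e^{k₀ t + m₀ x} ((k₁ t + m₁ x) P(k₀, m₀) + ∇P(k₀, m₀) · (k₁, m₁))`,
and the two characteristic conditions are exactly `P(k₀, m₀) = 0` and `∇P(k₀, m₀) · (k₁, m₁) = 0`. -/

open Complex

theorem hasDerivAt_linear_mul_cexp (a b c d : ℂ) (t : ℝ) :
    HasDerivAt (fun s : ℝ => (a * s + b) * exp (c * s + d))
      ((c * (a * t + b) + a) * exp (c * t + d)) t := by
  have hid : HasDerivAt (fun s : ℝ => (s : ℂ)) 1 t := (hasDerivAt_id t).ofReal_comp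
  have hlin : HasDerivAt (fun s : ℝ => a * (s : ℂ) + b) a t := by
    simpa using (hid.const_mul a).add_const b
  have hexp : HasDerivAt (fun s : ℝ => exp (c * (s : ℂ) + d)) (exp (c * t + d) * c) t := by
    simpa using ((hid.const_mul c).add_const d).cexp
  have hprod : HasDerivAt (fun s : ℝ => (a * s + b) * exp (c * s + d)) _ t := hlin.mul hexp
  convert hprod using 1
  ring

theorem iteratedDeriv_linear_mul_cexp (a b c d : ℂ) (n : ℕ) :
    iteratedDeriv n (fun s : ℝ => (a * s + b) * exp (c * s + d))
      = fun s : ℝ => (c ^ n * a * s + (c ^ n * b + n * c ^ (n - 1) * a)) * exp (c * s + d) := by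
  induction n with
  | zero => simp
  | succ n ih =>
    rw [iteratedDeriv_succ, ih]
    funext t
    rw [(hasDerivAt_linear_mul_cexp _ _ c d t).deriv]
    cases n with
    | zero => simp only [zero_add, Nat.cast_one, Nat.cast_zero, tsub_self, zero_mul, add_zero]; ring
    | succ n => push_cast; ring

theorem hydrodynamics_solution_deg_one_general (α β : ℝ) (k₀ m₀ k₁ m₁ : ℂ)
    (hchar : k₀ ^ 3 + α * k₀ ^ 2 - β * m₀ ^ 2 = 0)
    (hchar1 : 3 * k₀ ^ 2 * k₁ + 2 * α * k₀ * k₁ - 2 * β * m₀ * m₁ = 0)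
    (V : ℝ → ℝ → ℂ)
    (hV : ∀ t x : ℝ, V t x = (k₁ * t + m₁ * x) * Complex.exp (k₀ * t + m₀ * x)) :
    ∀ t x : ℝ,
      iteratedDeriv 3 (fun s : ℝ => V s x) t
        + (α : ℂ) * iteratedDeriv 2 (fun s : ℝ => V s x) t
        - (β : ℂ) * iteratedDeriv 2 (fun s : ℝ => V t s) x = 0 := by
  intro t x
  have hVt : (fun s : ℝ => V s x) = fun s : ℝ => (k₁ * s + m₁ * x) * exp (k₀ * s + m₀ * x) :=
    funext fun s => hV s x
  have hVx : (fun s : ℝ => V t s) = fun s : ℝ => (m₁ * s + k₁ * t) * exp (m₀ * s + k₀ * t) := by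
    funext s
    rw [hV]
    ring_nf
  rw [hVt, hVx]
  simp only [iteratedDeriv_linear_mul_cexp, Nat.reduceSub, Nat.cast_ofNat]
  rw [show m₀ * (x : ℂ) + k₀ * t = k₀ * t + m₀ * x by ring]
  linear_combination exp (k₀ * t + m₀ * x) * ((k₁ * t + m₁ * x) * hchar + hchar1)

/-- If `k₀³ + α·k₀² − β·m₀² = 0` and `3k₀²·k₁ + 2α·k₀·k₁ − 2β·m₀·m₁ = 0` with `α, β > 0`, then
`V(t,x) = (k₁t + m₁x)·exp(k₀t + m₀x)` satisfies the third-order hydrodynamics equation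
`∂³V/∂t³ + α·∂²V/∂t² − β·∂²V/∂x² = 0`. -/
theorem hydrodynamics_solution_deg_one (α β : ℝ) (hα : 0 < α) (hβ : 0 < β) (k₀ m₀ k₁ m₁ : ℂ)
    (hchar : k₀ ^ 3 + α * k₀ ^ 2 - β * m₀ ^ 2 = 0)
    (hchar1 : 3 * k₀ ^ 2 * k₁ + 2 * α * k₀ * k₁ - 2 * β * m₀ * m₁ = 0)
    (V : ℝ → ℝ → ℂ)
    (hV : ∀ t x : ℝ, V t x = (k₁ * t + m₁ * x) * Complex.exp (k₀ * t + m₀ * x)) :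
    ∀ t x : ℝ,
      iteratedDeriv 3 (fun s : ℝ => V s x) t
        + (α : ℂ) * iteratedDeriv 2 (fun s : ℝ => V s x) t
        - (β : ℂ) * iteratedDeriv 2 (fun s : ℝ => V t s) x = 0 :=
  hydrodynamics_solution_deg_one_general α β k₀ m₀ k₁ m₁ hchar hchar1 V hV
end
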